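/- Let d ≥ 1, β > d, and let R > 0 and L ≥ 1 be reals. Writing n₁, n₁' for the first coordinates of n, n' ∈ ℤ^d, and letting D₂ be the set of pairs (n, n') ∈ ℤ^d × ℤ^d with |n|_∞ ≥ L, |n'|_∞ ≥ L, |n−n'|_∞ ≤ L/R and max(|n₁|, |n₁'|) ≤ 2L/R, there is a constant C = C(d, β) such that Σ_{(n,n') ∈ D₂} (1+|n−n'|)^{−β} |n|^{−2d−2} |n'|^{−2d−2} |n₁| |n₁'| |n·n'| ≤ C R^{−2} L^{−3d}. -/

import Mathlib

/-!
On `D₂` the two first coordinates contribute at most `(2L/R)²`, Cauchy–Schwarz trades `|n·n'|`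
for `|n||n'|`, and `|n| ≥ L` leaves `L^{-2d-1}`. What remains is the convolution
`Σ (1+|n-n'|)^{-β} |n'|^{-2d-1}` over `|n'|_∞ ≥ L`, which factors after the shear
`(n, n') ↦ (n - n', n')`. Each factor is dominated by a product of one-variable weights, since
`x^{-ds} ≤ ∏ᵢ yᵢ^{-s}` whenever `0 < yᵢ ≤ x`: `(1+|m|)^{-β} ≤ ∏ (1+|mᵢ|)^{-β/d}`, summable as
`β/d > 1`, and `|n'|^{-2d} ≤ ∏ max(L, |n'ᵢ|)^{-2}`, whose one-variable sum is `O(1/L)`.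
The powers of `L` collect to `L² · L^{-2d-1} · L^{-1} · L^{-d} = L^{-3d}`.
-/

/-- Euclidean norm of a lattice point of `ℤ^d`. -/
noncomputable def zEucNorm {d : ℕ} (n : Fin d → ℤ) : ℝ :=
  Real.sqrt (∑ i, ((n i : ℝ)) ^ 2)

/-- ℓ∞ norm of a lattice point of `ℤ^d`. -/
noncomputable def zSupNorm {d : ℕ} (n : Fin d → ℤ) : ℝ :=
  ((Finset.univ.sup fun i => (n i).natAbs : ℕ) : ℝ)

open Finset

theorem Real.rpow_neg_card_mul_le_prod {ι : Type*} [Fintype ι] {x s : ℝ} {y : ι → ℝ}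
    (hs : 0 ≤ s) (hy : ∀ i, 0 < y i) (hyx : ∀ i, y i ≤ x) :
    x ^ (-(Fintype.card ι * s)) ≤ ∏ i, y i ^ (-s) := by
  rcases isEmpty_or_nonempty ι with hι | ⟨⟨i⟩⟩
  · simp
  have hx : 0 ≤ x := (hy i).le.trans (hyx i)
  calc x ^ (-(Fintype.card ι * s)) = ∏ _i : ι, x ^ (-s) := by
        rw [prod_const, card_univ, ← Real.rpow_mul_natCast hx]; ring_nf
    _ ≤ ∏ i, y i ^ (-s) := prod_le_prod (fun i _ => by positivity)
        fun i _ => Real.rpow_le_rpow_of_nonpos (hy i) (hyx i) (by linarith)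

theorem HasSum.fin_pi_prod {α : Type*} {g : α → ℝ} {a : ℝ} (hg : HasSum g a) (hg0 : 0 ≤ g)
    (k : ℕ) : HasSum (fun n : Fin k → α => ∏ i, g (n i)) (a ^ k) := by
  induction k with
  | zero => simp
  | succ k ih =>
    have h0 : 0 ≤ fun n : Fin k → α => ∏ i, g (n i) := fun n => prod_nonneg fun i _ => hg0 (n i)
    have hprod := hg.mul ih <| Summable.mul_of_nonneg (f := g)
      (g := fun n : Fin k → α => ∏ i, g (n i)) hg.summable ih.summable hg0 h0
    have hcons : (fun n : Fin (k + 1) → α => ∏ i, g (n i)) ∘ Fin.consEquiv (fun _ => α) =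
        fun x => g x.1 * ∏ i, g (x.2 i) := by
      ext x; simp [Fin.prod_univ_succ]
    rw [pow_succ', ← (Fin.consEquiv fun _ => α).hasSum_iff, hcons]
    exact hprod

theorem HasSum.comp_sub_mul_of_nonneg {V : Type*} [AddGroup V] {G K : V → ℝ} {a b : ℝ}
    (hG : HasSum G a) (hK : HasSum K b) (hG0 : 0 ≤ G) (hK0 : 0 ≤ K) :
    HasSum (fun p : V × V => G (p.1 - p.2) * K p.2) (a * b) := by
  let shear : V × V ≃ V × V :=
    { toFun := fun p => (p.1 + p.2, p.2)
      invFun := fun p => (p.1 - p.2, p.2)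
      left_inv := fun p => by simp
      right_inv := fun p => by simp }
  have hshear : (fun p : V × V => G (p.1 - p.2) * K p.2) ∘ shear = fun p => G p.1 * K p.2 := by
    ext p; simp [shear]
  have hprod :=
    hG.mul hK (Summable.mul_of_nonneg (f := G) (g := K) hG.summable hK.summable hG0 hK0)
  rw [← shear.hasSum_iff, hshear]
  exact hprod

theorem HasSum.int_abs {ψ : ℝ → ℝ} {s : ℝ} (h : HasSum (fun k : ℕ => ψ k) s) :
    HasSum (fun a : ℤ => ψ |(a : ℝ)|) (2 * s - ψ 0) := by
  simpa [two_mul] using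
    HasSum.of_nat_of_neg (f := fun a : ℤ => ψ |(a : ℝ)|) (by simpa using h) (by simpa using h)

theorem summable_and_tsum_le_of_le_hasSum {α : Type*} {p : α → Prop} {f : {x // p x} → ℝ}
    {F : α → ℝ} {S : ℝ} (hF : HasSum F S) (hF0 : 0 ≤ F) (hf0 : 0 ≤ f)
    (hfF : ∀ x, f x ≤ F x) : Summable f ∧ ∑' x, f x ≤ S := by
  have hf : Summable f :=
    .of_nonneg_of_le hf0 hfF (hF.summable.comp_injective Subtype.val_injective)
  exact ⟨hf, hF.tsum_eq ▸
    hf.tsum_le_tsum_of_inj _ Subtype.val_injective (fun x _ => hF0 x) hfF hF.summable⟩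

theorem summable_one_add_abs_rpow_neg {t : ℝ} (ht : 1 < t) :
    Summable fun a : ℤ => (1 + |(a : ℝ)|) ^ (-t) := by
  have hnat : Summable fun k : ℕ => (1 + (k : ℝ)) ^ (-t) := by
    have h1 : Summable fun k : ℕ => (k : ℝ) ^ (-t) := Real.summable_nat_rpow.mpr (by linarith)
    refine ((summable_nat_add_iff 1).mpr h1).congr fun k => ?_
    push_cast; ring_nf
  exact (hnat.hasSum.int_abs (ψ := fun x => (1 + x) ^ (-t))).summable

theorem max_rpow_neg_two_le {L x : ℝ} (hL : 1 ≤ L) (hx : 0 ≤ x) :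
    max L x ^ (-2 : ℝ) ≤ 8 * (1 / (L + x) - 1 / (L + x + 1)) := by
  have hmax : (L + x) / 2 ≤ max L x := by
    rcases le_total L x with h | h <;> simp [h] <;> linarith
  have hpos : 0 < L + x := by linarith
  calc max L x ^ (-2 : ℝ) = (max L x ^ 2)⁻¹ := by
        rw [Real.rpow_neg (by positivity), Real.rpow_two]
    _ ≤ (((L + x) / 2) ^ 2)⁻¹ := by gcongr
    _ = 8 * (1 / (L + x) - 1 / (L + x + 1)) * ((L + x + 1) / (2 * (L + x))) := by
      field_simp; ring
    _ ≤ 8 * (1 / (L + x) - 1 / (L + x + 1)) := by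
      have : 0 ≤ 1 / (L + x) - 1 / (L + x + 1) := by
        rw [sub_nonneg]; exact one_div_le_one_div_of_le hpos (by linarith)
      refine mul_le_of_le_one_right (by positivity) ?_
      rw [div_le_one (by positivity)]; linarith

theorem summable_max_abs_rpow_neg_two_and_tsum_le {L : ℝ} (hL : 1 ≤ L) :
    Summable (fun a : ℤ => max L |(a : ℝ)| ^ (-2 : ℝ)) ∧
      ∑' a : ℤ, max L |(a : ℝ)| ^ (-2 : ℝ) ≤ 16 / L := by
  have h0 : ∀ x : ℝ, 0 ≤ max L x ^ (-2 : ℝ) := fun x =>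
    Real.rpow_nonneg (le_max_of_le_left (by linarith)) _
  have hpartial : ∀ N, ∑ k ∈ range N, max L (k : ℝ) ^ (-2 : ℝ) ≤ 8 / L := fun N => by
    calc ∑ k ∈ range N, max L (k : ℝ) ^ (-2 : ℝ)
        ≤ ∑ k ∈ range N, 8 * (1 / (L + k) - 1 / (L + (k + 1 : ℕ))) := by
          gcongr with k; push_cast; rw [← add_assoc]; exact max_rpow_neg_two_le hL k.cast_nonneg
      _ = 8 * (1 / L - 1 / (L + N)) := by
          rw [← mul_sum, sum_range_sub' (fun k : ℕ => 1 / (L + k))]; simp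
      _ ≤ 8 / L := by
          have : 0 ≤ 1 / (L + N) := by positivity
          linarith [mul_one_div 8 L]
  have hnat := (summable_of_sum_range_le (fun k => h0 k) hpartial).hasSum
  have hint := hnat.int_abs (ψ := fun x => max L x ^ (-2 : ℝ))
  refine ⟨hint.summable, hint.tsum_eq ▸ ?_⟩
  linarith [Real.tsum_le_of_sum_range_le (fun k => h0 k) hpartial, h0 0, mul_div_assoc 2 8 L]

section LatticeNorms

variable {d : ℕ} (n : Fin d → ℤ)

theorem zEucNorm_nonneg : 0 ≤ zEucNorm n := Real.sqrt_nonneg _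

theorem abs_le_zEucNorm (i : Fin d) : |(n i : ℝ)| ≤ zEucNorm n :=
  Real.abs_le_sqrt (single_le_sum (f := fun j => (n j : ℝ) ^ 2) (fun _ _ => sq_nonneg _)
    (mem_univ i))

theorem zSupNorm_le_iff {x : ℝ} (hx : 0 ≤ x) : zSupNorm n ≤ x ↔ ∀ i, |(n i : ℝ)| ≤ x := by
  simp only [zSupNorm, ← Nat.le_floor_iff hx, Finset.sup_le_iff, mem_univ, true_implies]
  simp [Nat.le_floor_iff hx, Nat.cast_natAbs]

theorem zSupNorm_le_zEucNorm : zSupNorm n ≤ zEucNorm n :=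
  (zSupNorm_le_iff n (zEucNorm_nonneg n)).2 (abs_le_zEucNorm n)

theorem abs_inner_le_zEucNorm_mul (n' : Fin d → ℤ) :
    |∑ i, (n i : ℝ) * (n' i : ℝ)| ≤ zEucNorm n * zEucNorm n' := by
  refine abs_le.2 ⟨?_, Real.sum_mul_le_sqrt_mul_sqrt _ _ _⟩
  have := Real.sum_mul_le_sqrt_mul_sqrt univ (fun i => -(n i : ℝ)) (fun i => (n' i : ℝ))
  simp only [neg_mul, sum_neg_distrib, neg_sq] at this
  rw [zEucNorm, zEucNorm]
  linarith

end LatticeNorms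

noncomputable def decayWeight {d : ℕ} (t : ℝ) (m : Fin d → ℤ) : ℝ :=
  ∏ i, (1 + |(m i : ℝ)|) ^ (-t)

noncomputable def tailWeight {d : ℕ} (L : ℝ) (n : Fin d → ℤ) : ℝ :=
  ∏ i, max L |(n i : ℝ)| ^ (-2 : ℝ)

noncomputable def pairTerm {d : ℕ} (β : ℝ) (i₀ : Fin d) (n n' : Fin d → ℤ) : ℝ :=
  (1 + zEucNorm (n - n')) ^ (-β) * zEucNorm n ^ (-(2 * (d : ℝ)) - 2) *
    zEucNorm n' ^ (-(2 * (d : ℝ)) - 2) * |(n i₀ : ℝ)| * |(n' i₀ : ℝ)| *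
    |∑ i, (n i : ℝ) * (n' i : ℝ)|

section Weights

variable {d : ℕ}

theorem decayWeight_nonneg (t : ℝ) (m : Fin d → ℤ) : 0 ≤ decayWeight t m := by
  unfold decayWeight; positivity

theorem tailWeight_nonneg {L : ℝ} (hL : 0 ≤ L) (n : Fin d → ℤ) : 0 ≤ tailWeight L n :=
  prod_nonneg fun _ _ => Real.rpow_nonneg (le_max_of_le_left hL) _

theorem pairTerm_nonneg (β : ℝ) (i₀ : Fin d) (n n' : Fin d → ℤ) : 0 ≤ pairTerm β i₀ n n' := by
  unfold pairTerm
  have := zEucNorm_nonneg (n - n')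
  have := zEucNorm_nonneg n
  have := zEucNorm_nonneg n'
  positivity

theorem one_add_zEucNorm_rpow_neg_le_decayWeight (hd : d ≠ 0) {β : ℝ} (hβ : 0 ≤ β)
    (m : Fin d → ℤ) : (1 + zEucNorm m) ^ (-β) ≤ decayWeight (β / d) m := by
  have := Real.rpow_neg_card_mul_le_prod (x := 1 + zEucNorm m) (y := fun i => 1 + |(m i : ℝ)|)
    (by positivity : 0 ≤ β / d) (fun i => by positivity)
    (fun i => by linarith [abs_le_zEucNorm m i])
  rwa [Fintype.card_fin, mul_div_cancel₀ _ (by exact_mod_cast hd)] at this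

theorem zEucNorm_rpow_neg_le_tailWeight {L : ℝ} (hL : 0 < L) {n : Fin d → ℤ}
    (hn : L ≤ zSupNorm n) :
    zEucNorm n ^ (-(2 * (d : ℝ) + 1)) ≤ L ^ (-1 : ℝ) * tailWeight L n := by
  have hLn : L ≤ zEucNorm n := hn.trans (zSupNorm_le_zEucNorm n)
  have hmax : ∀ i, max L |(n i : ℝ)| ≤ zEucNorm n := fun i => max_le hLn (abs_le_zEucNorm n i)
  have hprod := Real.rpow_neg_card_mul_le_prod (s := 2) zero_le_two
    (fun i => lt_max_of_lt_left hL) hmax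
  rw [Fintype.card_fin] at hprod
  rw [show -(2 * (d : ℝ) + 1) = -1 + -(d * 2) by ring, Real.rpow_add (hL.trans_le hLn)]
  exact mul_le_mul (Real.rpow_le_rpow_of_nonpos hL hLn (by norm_num)) hprod
    (Real.rpow_nonneg (zEucNorm_nonneg n) _) (by positivity)

end Weights

theorem pairTerm_le {d : ℕ} (hd : d ≠ 0) {β L M : ℝ} (hβ : 0 ≤ β) (hL : 0 < L) (i₀ : Fin d)
    {n n' : Fin d → ℤ} (hn : L ≤ zSupNorm n) (hn' : L ≤ zSupNorm n')
    (hM : max |(n i₀ : ℝ)| |(n' i₀ : ℝ)| ≤ M) :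
    pairTerm β i₀ n n' ≤
      M ^ 2 * L ^ (-(2 * (d : ℝ)) - 2) * (decayWeight (β / d) (n - n') * tailWeight L n') := by
  set x := zEucNorm n
  set y := zEucNorm n'
  have hLx : L ≤ x := hn.trans (zSupNorm_le_zEucNorm n)
  have hx : 0 < x := hL.trans_le hLx
  have hy : 0 < y := hL.trans_le (hn'.trans (zSupNorm_le_zEucNorm n'))
  have hnorms : x ^ (-(2 * (d : ℝ)) - 2) * y ^ (-(2 * (d : ℝ)) - 2) *
      |∑ i, (n i : ℝ) * (n' i : ℝ)| ≤ L ^ (-(2 * (d : ℝ)) - 2) * tailWeight L n' :=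
    calc _ ≤ x ^ (-(2 * (d : ℝ)) - 2) * y ^ (-(2 * (d : ℝ)) - 2) * (x * y) := by
          gcongr; exact abs_inner_le_zEucNorm_mul n n'
      _ = x ^ (-(2 * (d : ℝ)) - 2 + 1) * y ^ (-(2 * (d : ℝ) + 1)) := by
          rw [Real.rpow_add_one hx.ne', show -(2 * (d : ℝ) + 1) = -(2 * (d : ℝ)) - 2 + 1 by ring,
            Real.rpow_add_one hy.ne']
          ring
      _ ≤ L ^ (-(2 * (d : ℝ)) - 2 + 1) * (L ^ (-1 : ℝ) * tailWeight L n') := by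
          have hexp : -(2 * (d : ℝ)) - 2 + 1 ≤ 0 := by linarith [(d.cast_nonneg : (0 : ℝ) ≤ d)]
          exact mul_le_mul (Real.rpow_le_rpow_of_nonpos hL hLx hexp)
            (zEucNorm_rpow_neg_le_tailWeight hL hn') (by positivity) (by positivity)
      _ = L ^ (-(2 * (d : ℝ)) - 2) * tailWeight L n' := by
          rw [← mul_assoc, ← Real.rpow_add hL]; ring_nf
  have hfirst : |(n i₀ : ℝ)| * |(n' i₀ : ℝ)| ≤ M ^ 2 := by
    rw [max_le_iff] at hM
    rw [sq]; exact mul_le_mul hM.1 hM.2 (abs_nonneg _) ((abs_nonneg _).trans hM.1)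
  calc pairTerm β i₀ n n' = (1 + zEucNorm (n - n')) ^ (-β) * (x ^ (-(2 * (d : ℝ)) - 2) *
        y ^ (-(2 * (d : ℝ)) - 2) * |∑ i, (n i : ℝ) * (n' i : ℝ)|) *
        (|(n i₀ : ℝ)| * |(n' i₀ : ℝ)|) := by unfold pairTerm; ring
    _ ≤ decayWeight (β / d) (n - n') * (L ^ (-(2 * (d : ℝ)) - 2) * tailWeight L n') *
        M ^ 2 := by
        refine mul_le_mul (mul_le_mul (one_add_zEucNorm_rpow_neg_le_decayWeight hd hβ _) hnorms
          (by positivity) (decayWeight_nonneg _ _)) hfirst (by positivity) ?_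
        have := decayWeight_nonneg (β / d) (n - n')
        have := tailWeight_nonneg hL.le n'
        positivity
    _ = _ := by ring

/-- diagonal regime perpendicular to `e₁`. Over the set `D₂` of
pairs with `|n|_∞, |n'|_∞ ≥ L`, `|n-n'|_∞ ≤ L/R` and
`max(|n₁|, |n₁'|) ≤ 2L/R`, one has
`Σ (1+|n-n'|)^{-β} |n|^{-2d-2} |n'|^{-2d-2} |n₁||n₁'||n·n'| ≤ C R^{-2} L^{-3d}`,
with `C = C(d, β)`. -/
theorem perpendicular_diagonal_regime_estimate (d : ℕ) (hd : 1 ≤ d) (β : ℝ)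
    (hβ : (d : ℝ) < β) :
    ∃ C : ℝ, 0 < C ∧ ∀ R L : ℝ, 0 < R → 1 ≤ L →
      Summable (fun p : {p : (Fin d → ℤ) × (Fin d → ℤ) //
          L ≤ zSupNorm p.1 ∧ L ≤ zSupNorm p.2 ∧ zSupNorm (p.1 - p.2) ≤ L / R ∧
          max |((p.1 ⟨0, by omega⟩ : ℤ) : ℝ)| |((p.2 ⟨0, by omega⟩ : ℤ) : ℝ)| ≤
            2 * L / R} =>
        (1 + zEucNorm (p.1.1 - p.1.2)) ^ (-β) *
          zEucNorm p.1.1 ^ (-(2 * (d : ℝ)) - 2) *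
          zEucNorm p.1.2 ^ (-(2 * (d : ℝ)) - 2) *
          |((p.1.1 ⟨0, by omega⟩ : ℤ) : ℝ)| * |((p.1.2 ⟨0, by omega⟩ : ℤ) : ℝ)| *
          |∑ i, ((p.1.1 i : ℝ) * (p.1.2 i : ℝ))|) ∧
      (∑' p : {p : (Fin d → ℤ) × (Fin d → ℤ) //
          L ≤ zSupNorm p.1 ∧ L ≤ zSupNorm p.2 ∧ zSupNorm (p.1 - p.2) ≤ L / R ∧
          max |((p.1 ⟨0, by omega⟩ : ℤ) : ℝ)| |((p.2 ⟨0, by omega⟩ : ℤ) : ℝ)| ≤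
            2 * L / R},
        (1 + zEucNorm (p.1.1 - p.1.2)) ^ (-β) *
          zEucNorm p.1.1 ^ (-(2 * (d : ℝ)) - 2) *
          zEucNorm p.1.2 ^ (-(2 * (d : ℝ)) - 2) *
          |((p.1.1 ⟨0, by omega⟩ : ℤ) : ℝ)| * |((p.1.2 ⟨0, by omega⟩ : ℤ) : ℝ)| *
          |∑ i, ((p.1.1 i : ℝ) * (p.1.2 i : ℝ))|) ≤
        C * R ^ (-2 : ℤ) * L ^ (-(3 * (d : ℝ))) := by
  have ht : 1 < β / d := by rwa [one_lt_div (by positivity)]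
  have hA := (summable_one_add_abs_rpow_neg ht).hasSum
  set A := ∑' a : ℤ, (1 + |(a : ℝ)|) ^ (-(β / d))
  have hA1 : 1 ≤ A := by simpa using le_hasSum hA 0 fun a _ => by positivity
  refine ⟨4 * 16 ^ d * A ^ d, by positivity, fun R L hR hL => ?_⟩
  have hL0 : 0 < L := by linarith
  obtain ⟨hBs, hB⟩ := summable_max_abs_rpow_neg_two_and_tsum_le hL
  set B := ∑' a : ℤ, max L |(a : ℝ)| ^ (-2 : ℝ)
  have hF := ((hA.fin_pi_prod (fun _ => by positivity) d).comp_sub_mul_of_nonneg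
    (hBs.hasSum.fin_pi_prod (fun _ => by positivity) d)
    (decayWeight_nonneg _) (tailWeight_nonneg hL0.le)).mul_left
    ((2 * L / R) ^ 2 * L ^ (-(2 * (d : ℝ)) - 2))
  refine And.imp_right (fun h => h.trans ?_) (summable_and_tsum_le_of_le_hasSum hF
    (fun p => by positivity) (fun p => pairTerm_nonneg β _ p.1.1 p.1.2)
    (fun p => pairTerm_le (by omega) (by linarith) hL0 _ p.2.1 p.2.2.1 p.2.2.2.2))
  have hB0 : 0 ≤ B := tsum_nonneg fun _ => by positivity
  have hLpow : L ^ (-(3 * (d : ℝ))) = L ^ (-(2 * (d : ℝ)) - 2) * L ^ 2 / L ^ d := by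
    rw [eq_div_iff (by positivity), ← Real.rpow_natCast, ← Real.rpow_natCast,
      ← Real.rpow_add hL0, ← Real.rpow_add hL0]
    ring_nf
  calc _ ≤ (2 * L / R) ^ 2 * L ^ (-(2 * (d : ℝ)) - 2) * (A ^ d * (16 / L) ^ d) := by gcongr
    _ = 4 * 16 ^ d * A ^ d * R ^ (-2 : ℤ) * L ^ (-(3 * (d : ℝ))) := by
      simp only [hLpow, zpow_neg, zpow_two, div_pow]
      generalize L ^ (-(2 * (d : ℝ)) - 2) = X
      field_simp
      ring
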